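/- Let T be a tree with b(T) ≥ 2 and let f be a maximum-weight bn-independent broadcast on T minimizing the number of overdominated branch vertices. Then no leaf l overdominates a branch vertex w by exactly 2, i.e., there is no leaf l with f(l) = d(l,w) + 2 for a branch vertex w overdominated by l. -/

import Mathlib

open SimpleGraph Finset
open scoped Classical

noncomputable section

/-- Eccentricity of a vertex. -/
def gecc {V : Type*} (G : SimpleGraph V) [Fintype V] (v : V) : ℕ :=
  Finset.univ.sup fun u => G.dist v u

/-- A broadcast: `f v ≤ e(v)` for all `v`. -/
def IsBroadcast {V : Type*} (G : SimpleGraph V) [Fintype V] (f : V → ℕ) : Prop :=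
  ∀ v, f v ≤ gecc G v

/-- `u` hears `f` from `v`. -/
def Hears {V : Type*} (G : SimpleGraph V) (f : V → ℕ) (u v : V) : Prop :=
  0 < f v ∧ G.dist u v ≤ f v

/-- Boundary independent broadcast: a vertex hearing two or more broadcasting
vertices lies in the boundary of each. -/
def BnIndep {V : Type*} (G : SimpleGraph V) [Fintype V] (f : V → ℕ) : Prop :=
  IsBroadcast G f ∧
    ∀ w v₁ v₂, v₁ ≠ v₂ → Hears G f w v₁ → Hears G f w v₂ → G.dist w v₁ = f v₁

/-- Weight of a broadcast. -/
def bweight {V : Type*} [Fintype V] (f : V → ℕ) : ℕ := ∑ v, f v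

/-- The boundary independence number. -/
def alphaBn {V : Type*} (G : SimpleGraph V) [Fintype V] : ℕ :=
  sSup {w | ∃ f, BnIndep G f ∧ bweight f = w}

/-- Set of branch vertices (degree at least 3). -/
def branchSet {V : Type*} (G : SimpleGraph V) [Fintype V] : Finset V :=
  Finset.univ.filter fun v => 3 ≤ G.degree v

/-- `l` is a leaf joined to `v` by an endpath (all internal vertices of degree 2). -/
def IsEndpathTo {V : Type*} (G : SimpleGraph V) [Fintype V] (v l : V) : Prop :=
  G.degree l = 1 ∧ ∃ p : G.Walk v l, p.IsPath ∧
    ∀ u ∈ p.support, u ≠ v → u ≠ l → G.degree u = 2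

/-- Leaf set `L(v)` of a vertex `v`. -/
def leafSet {V : Type*} (G : SimpleGraph V) [Fintype V] (v : V) : Finset V :=
  Finset.univ.filter fun l => IsEndpathTo G v l

/-- `R(T)`: branch vertices with at most one leaf in their leaf set. -/
def rset {V : Type*} (G : SimpleGraph V) [Fintype V] : Finset V :=
  (branchSet G).filter fun v => (leafSet G v).card ≤ 1

/-- Edge `uv` is covered by broadcasting vertex `x`. -/
def Covers {V : Type*} (G : SimpleGraph V) (f : V → ℕ) (x u v : V) : Prop :=
  0 < f x ∧ G.Adj u v ∧ G.dist u x ≤ f x ∧ G.dist v x ≤ f x ∧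
    (G.dist u x < f x ∨ G.dist v x < f x)

/-- The graph `G - U_f^E` obtained by deleting all `f`-uncovered edges. -/
def coveredSubgraph {V : Type*} (G : SimpleGraph V) (f : V → ℕ) : SimpleGraph V where
  Adj u v := G.Adj u v ∧ ∃ x, Covers G f x u v
  symm := ⟨by
    rintro u v ⟨h, x, h1, h2, h3, h4, h5⟩
    exact ⟨h.symm, x, h1, h2.symm, h4, h3, h5.symm⟩⟩
  loopless := ⟨by rintro u ⟨h, -⟩; exact G.loopless.irrefl u h⟩

/-- `f` is a maximal bn-independent broadcast. -/
def MaximalBn {V : Type*} (G : SimpleGraph V) [Fintype V] (f : V → ℕ) : Prop :=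
  BnIndep G f ∧ ∀ g, BnIndep G g → (∀ v, f v ≤ g v) → g = f

/-- The `f`-private boundary of `v`: vertices of `N_f(v)` not dominated once the
broadcast strength of `v` is lowered by one. -/
def privBoundary {V : Type*} (G : SimpleGraph V) (f : V → ℕ) (v : V) : Set V :=
  {u | G.dist u v ≤ f v ∧ ∀ x, ¬ Hears G (Function.update f v (f v - 1)) u x}

/-- The branch representation: branch vertices adjacent iff the path between them
contains no other branch vertex. -/
def branchRep {V : Type*} (G : SimpleGraph V) [Fintype V] : SimpleGraph V where
  Adj b₁ b₂ := b₁ ≠ b₂ ∧ 3 ≤ G.degree b₁ ∧ 3 ≤ G.degree b₂ ∧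
    ∀ p : G.Walk b₁ b₂, p.IsPath → ∀ u ∈ p.support, 3 ≤ G.degree u → u = b₁ ∨ u = b₂
  symm := ⟨by
    rintro a b ⟨hab, ha, hb, h⟩
    refine ⟨hab.symm, hb, ha, fun p hp u hu hdeg => ?_⟩
    have hu' : u ∈ p.reverse.support := by
      rw [SimpleGraph.Walk.support_reverse]; exact List.mem_reverse.mpr hu
    exact (h p.reverse hp.reverse u hu' hdeg).symm⟩
  loopless := ⟨by rintro v ⟨h, -⟩; exact h rfl⟩

/-- Hearing independent broadcast. -/
def HIndep {V : Type*} (G : SimpleGraph V) [Fintype V] (f : V → ℕ) : Prop :=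
  IsBroadcast G f ∧ ∀ u v, u ≠ v → 0 < f u → 0 < f v → f v < G.dist u v

/-- The hearing independence number. -/
def alphaH {V : Type*} (G : SimpleGraph V) [Fintype V] : ℕ :=
  sSup {w | ∃ f, HIndep G f ∧ bweight f = w}

/-- Diameter. -/
def gdiam {V : Type*} (G : SimpleGraph V) [Fintype V] : ℕ :=
  Finset.univ.sup fun v => gecc G v

/-
Suppose `f l = d + 2` where `d = d(l, w)` for a branch vertex `w`. In a tree only one neighbour of
`w` is closer to `l`, so `w` has two neighbours `u, u'` at distance `d + 1` from `l`. On the open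
ball of radius `d + 2` around `l` the broadcast `f` vanishes except at `l`, and we replace it there
by `l ↦ d, u ↦ 1, u' ↦ 1`. The weight is unchanged, and since the three new balls lie in the ball of
`l` and pairwise meet only on their boundaries, bn-independence survives. Every branch vertex the new
broadcast overdominates was overdominated by `l`, but `w` no longer is, contradicting minimality.
-/

namespace SimpleGraph.IsTree

variable {V : Type*} {T : SimpleGraph V}

theorem eq_of_adj_of_dist_eq_add_one (hT : T.IsTree) {l w x y : V} (hx : T.Adj w x)
    (hy : T.Adj w y) (hxd : T.dist l w = T.dist l x + 1) (hyd : T.dist l w = T.dist l y + 1) :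
    x = y := by
  have hsnd : ∀ z, T.Adj w z → T.dist l w = T.dist l z + 1 → ∃ p : T.Path w l, p.val.snd = z := by
    intro z hz hzd
    obtain ⟨p, hp⟩ := hT.connected.exists_walk_length_eq_dist z l
    refine ⟨⟨.cons hz p, Walk.isPath_of_length_eq_dist _ ?_⟩, Walk.snd_cons p hz⟩
    rw [Walk.length_cons, hp, dist_comm, dist_comm (u := w), hzd]
  obtain ⟨p, rfl⟩ := hsnd x hx hxd
  obtain ⟨q, rfl⟩ := hsnd y hy hyd
  rw [(hT.isAcyclic.subsingleton_path w l).elim p q]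

theorem exists_adj_adj_dist_eq_add_one (hT : T.IsTree) (l : V) {w : V}
    [Fintype (T.neighborSet w)] (hw : 3 ≤ T.degree w) :
    ∃ u u', u ≠ u' ∧ T.Adj w u ∧ T.Adj w u' ∧
      T.dist l u = T.dist l w + 1 ∧ T.dist l u' = T.dist l w + 1 := by
  set farther := (T.neighborFinset w).filter fun x => T.dist l x = T.dist l w + 1
  set closer := (T.neighborFinset w).filter fun x => T.dist l w = T.dist l x + 1
  have hcloser : closer.card ≤ 1 := card_le_one.2 fun x hx y hy => by
    simp only [closer, mem_filter, mem_neighborFinset] at hx hy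
    exact hT.eq_of_adj_of_dist_eq_add_one hx.1 hy.1 hx.2 hy.2
  have hcover : T.neighborFinset w ⊆ farther ∪ closer := fun x hx => by
    have := hT.dist_eq_dist_add_one_of_adj l ((mem_neighborFinset T w x).1 hx)
    simp only [farther, closer, mem_union, mem_filter]
    tauto
  have := (card_le_card hcover).trans (card_union_le _ _)
  rw [card_neighborFinset_eq_degree] at this
  obtain ⟨u, hu, u', hu', hne⟩ := one_lt_card.1 (by omega : 1 < farther.card)
  simp only [farther, mem_filter, mem_neighborFinset] at hu hu'
  exact ⟨u, u', hne, hu.1, hu'.1, hu.2, hu'.2⟩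

end SimpleGraph.IsTree

section Broadcast

variable {V : Type*} {G : SimpleGraph V} {f h : V → ℕ} {l : V}

def Overdominates (G : SimpleGraph V) (f : V → ℕ) (v u : V) : Prop :=
  0 < f v ∧ G.dist u v < f v

-- Not phrased through `Overdominates`, so that the `Decidable` instance of the filter is the one
-- elaborated in `stmt17`.
def overdominatedBranches [Fintype V] (G : SimpleGraph V) (f : V → ℕ) : Finset V :=
  univ.filter fun w => 3 ≤ G.degree w ∧ ∃ v, 0 < f v ∧ G.dist w v < f v

theorem dist_le_gecc [Fintype V] (v u : V) : G.dist v u ≤ gecc G v :=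
  le_sup (f := fun u => G.dist v u) (mem_univ u)

theorem BnIndep.not_hears_of_dist_lt [Fintype V] (hf : BnIndep G f) {v x : V} (hvl : v ≠ l)
    (hx : G.dist x l < f l) : ¬ Hears G f x v :=
  fun hv => hx.ne (hf.2 x l v hvl.symm ⟨by omega, hx.le⟩ hv)

theorem BnIndep.eq_zero_of_dist_lt [Fintype V] (hf : BnIndep G f) {v : V} (hvl : v ≠ l)
    (hv : G.dist v l < f l) : f v = 0 := by
  by_contra hv0
  exact hf.not_hears_of_dist_lt hvl hv ⟨Nat.pos_of_ne_zero hv0, by simp⟩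

theorem bnIndep_of_add_le_dist [Fintype V] (hG : G.Connected) (hh : IsBroadcast G h)
    (hsep : ∀ v₁ v₂, v₁ ≠ v₂ → 0 < h v₁ → 0 < h v₂ → h v₁ + h v₂ ≤ G.dist v₁ v₂) :
    BnIndep G h := by
  refine ⟨hh, fun x v₁ v₂ hne ⟨hv₁, hx₁⟩ ⟨hv₂, hx₂⟩ => ?_⟩
  have := hsep v₁ v₂ hne hv₁ hv₂
  have : G.dist v₁ v₂ ≤ G.dist v₁ x + G.dist x v₂ := hG.dist_triangle
  have : G.dist v₁ x = G.dist x v₁ := dist_comm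
  omega

def rebroadcast (G : SimpleGraph V) (f h : V → ℕ) (l : V) : V → ℕ :=
  fun v => if G.dist v l < f l then h v else f v

theorem rebroadcast_of_lt {v : V} (hv : G.dist v l < f l) : rebroadcast G f h l v = h v :=
  if_pos hv

theorem rebroadcast_of_not_lt {v : V} (hv : ¬ G.dist v l < f l) :
    rebroadcast G f h l v = f v :=
  if_neg hv

theorem hears_rebroadcast_of_lt {x v : V} (hv : G.dist v l < f l) :
    Hears G (rebroadcast G f h l) x v ↔ Hears G h x v := by
  rw [Hears, Hears, rebroadcast_of_lt hv]

theorem hears_rebroadcast_of_not_lt {x v : V} (hv : ¬ G.dist v l < f l) :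
    Hears G (rebroadcast G f h l) x v ↔ Hears G f x v := by
  rw [Hears, Hears, rebroadcast_of_not_lt hv]

theorem hears_center_of_hears_of_ball (hG : G.Connected)
    (hball : ∀ v, 0 < h v → G.dist v l + h v ≤ f l) {x v : V} (hx : Hears G h x v) :
    Hears G f x l := by
  obtain ⟨hv, hxv⟩ := hx
  have := hball v hv
  have : G.dist x l ≤ G.dist x v + G.dist v l := hG.dist_triangle
  exact ⟨by omega, by omega⟩

theorem bnIndep_rebroadcast [Fintype V] (hG : G.Connected) (hf : BnIndep G f)
    (hh : BnIndep G h) (hball : ∀ v, 0 < h v → G.dist v l + h v ≤ f l) :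
    BnIndep G (rebroadcast G f h l) := by
  refine ⟨fun v => ?_, fun x v₁ v₂ hne h₁ h₂ => ?_⟩
  · unfold rebroadcast
    split_ifs
    exacts [hh.1 v, hf.1 v]
  by_cases hv₁ : G.dist v₁ l < f l <;> by_cases hv₂ : G.dist v₂ l < f l <;>
    simp only [hears_rebroadcast_of_lt, hears_rebroadcast_of_not_lt, rebroadcast_of_lt,
      rebroadcast_of_not_lt, hv₁, hv₂, not_false_eq_true] at h₁ h₂ ⊢
  · exact hh.2 x v₁ v₂ hne h₁ h₂
  · -- `x` hears `l` and a vertex outside its ball, so it lies on the boundary of `l`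
    have hl₂ : l ≠ v₂ := by rintro rfl; rw [dist_self] at hv₂; omega
    have hxl := hf.2 x l v₂ hl₂ (hears_center_of_hears_of_ball hG hball h₁) h₂
    obtain ⟨hpos, hx₁⟩ := h₁
    have := hball v₁ hpos
    have : G.dist x l ≤ G.dist x v₁ + G.dist v₁ l := hG.dist_triangle
    omega
  · have hv₁l : v₁ ≠ l := by rintro rfl; rw [dist_self] at hv₁; omega
    exact hf.2 x v₁ l hv₁l h₁ (hears_center_of_hears_of_ball hG hball h₂)
  · exact hf.2 x v₁ v₂ hne h₁ h₂

theorem BnIndep.bweight_rebroadcast [Fintype V] (hf : BnIndep G f)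
    (hball : ∀ v, 0 < h v → G.dist v l + h v ≤ f l) :
    bweight (rebroadcast G f h l) + f l = bweight f + bweight h := by
  set inBall : V → Prop := fun v => G.dist v l < f l
  have hf_in : ∑ v ∈ univ.filter inBall, f v = f l := by
    refine sum_eq_single l (fun v hv hvl => hf.eq_zero_of_dist_lt hvl (mem_filter.1 hv).2)
      fun hl => ?_
    simpa [inBall] using hl
  have hh_out : ∑ v ∈ univ.filter (fun v => ¬ inBall v), h v = 0 :=
    sum_eq_zero fun v hv => by
      by_contra hv0
      have := hball v (Nat.pos_of_ne_zero hv0)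
      exact (mem_filter.1 hv).2 (by simp only [inBall]; omega)
  unfold bweight rebroadcast
  rw [sum_ite, ← sum_filter_add_sum_filter_not univ inBall f,
    ← sum_filter_add_sum_filter_not univ inBall h, hf_in, hh_out]
  ring

theorem overdominates_of_overdominates_rebroadcast [Fintype V] (hG : G.Connected)
    (hf : BnIndep G f) (hball : ∀ v, 0 < h v → G.dist v l + h v ≤ f l) {b v : V}
    (hbv : Overdominates G (rebroadcast G f h l) v b) :
    (Overdominates G h v b ∧ Overdominates G f l b) ∨
      (Overdominates G f v b ∧ f l ≤ G.dist b l) := by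
  by_cases hv : G.dist v l < f l
  · rw [Overdominates, rebroadcast_of_lt hv] at hbv
    have := hball v hbv.1
    have : G.dist b l ≤ G.dist b v + G.dist v l := hG.dist_triangle
    exact Or.inl ⟨hbv, by omega, by omega⟩
  · rw [Overdominates, rebroadcast_of_not_lt hv] at hbv
    refine Or.inr ⟨hbv, not_lt.1 fun hb => ?_⟩
    have hvl : v ≠ l := by rintro rfl; rw [dist_self] at hv; omega
    exact hf.not_hears_of_dist_lt hvl hb ⟨hbv.1, hbv.2.le⟩

theorem overdominatedBranches_rebroadcast_ssubset [Fintype V] (hG : G.Connected)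
    (hf : BnIndep G f) (hball : ∀ v, 0 < h v → G.dist v l + h v ≤ f l) {w : V}
    (hw : 3 ≤ G.degree w) (hwl : G.dist w l < f l) (hwh : ∀ v, ¬ Overdominates G h v w) :
    overdominatedBranches G (rebroadcast G f h l) ⊂ overdominatedBranches G f := by
  have hsub : overdominatedBranches G (rebroadcast G f h l) ⊆ overdominatedBranches G f := by
    intro b hb
    obtain ⟨-, hb, v, hbv⟩ := mem_filter.1 hb
    refine mem_filter.2 ⟨mem_univ b, hb, ?_⟩
    rcases overdominates_of_overdominates_rebroadcast hG hf hball hbv with ⟨-, h⟩ | ⟨h, -⟩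
    exacts [⟨l, h⟩, ⟨v, h⟩]
  refine (ssubset_iff_of_subset hsub).2 ⟨w, mem_filter.2 ⟨mem_univ w, hw, l, by omega, hwl⟩, ?_⟩
  rintro hw'
  obtain ⟨-, -, v, hwv⟩ := mem_filter.1 hw'
  rcases overdominates_of_overdominates_rebroadcast hG hf hball hwv with ⟨h, -⟩ | ⟨-, h⟩
  exacts [hwh v h, not_le.2 hwl h]

end Broadcast

section SplitBroadcast

variable {V : Type*} {T : SimpleGraph V} {l u u' : V} {d : ℕ}

def splitBroadcast (l u u' : V) (d : ℕ) : V → ℕ :=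
  Pi.single l d + Pi.single u 1 + Pi.single u' 1

theorem bweight_splitBroadcast [Fintype V] : bweight (splitBroadcast l u u' d) = d + 2 := by
  simp [bweight, splitBroadcast, sum_add_distrib]

theorem splitBroadcast_cases (hul : T.dist l u = d + 1) (hu'l : T.dist l u' = d + 1)
    (huu' : u ≠ u') {v : V} (hv : 0 < splitBroadcast l u u' d v) :
    (v = l ∧ splitBroadcast l u u' d v = d) ∨ (v = u ∧ splitBroadcast l u u' d v = 1) ∨
      (v = u' ∧ splitBroadcast l u u' d v = 1) := by
  have hlu : l ≠ u := by rintro rfl; simp at hul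
  have hlu' : l ≠ u' := by rintro rfl; simp at hu'l
  simp only [splitBroadcast, Pi.add_apply, Pi.single_apply] at hv ⊢
  by_cases h₁ : v = l
  · subst h₁; simp [hlu, hlu']
  by_cases h₂ : v = u
  · subst h₂; simp [hlu.symm, huu']
  by_cases h₃ : v = u'
  · subst h₃; simp [hlu'.symm, huu'.symm]
  simp [h₁, h₂, h₃] at hv

theorem bnIndep_splitBroadcast [Fintype V] (hT : T.IsTree) (hul : T.dist l u = d + 1)
    (hu'l : T.dist l u' = d + 1) (huu' : u ≠ u') : BnIndep T (splitBroadcast l u u' d) := by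
  have hsep : 1 < T.dist u u' :=
    hT.connected.one_lt_dist_of_ne_of_not_adj huu' fun hadj =>
      hT.dist_ne_of_adj l hadj (hul.trans hu'l.symm)
  have : T.dist u' u = T.dist u u' := dist_comm
  have : T.dist u l = T.dist l u := dist_comm
  have : T.dist u' l = T.dist l u' := dist_comm
  refine bnIndep_of_add_le_dist hT.connected (fun v => ?_) fun v₁ v₂ hne h₁ h₂ => ?_
  · by_cases hv : 0 < splitBroadcast l u u' d v
    · rcases splitBroadcast_cases hul hu'l huu' hv with ⟨rfl, e⟩ | ⟨rfl, e⟩ | ⟨rfl, e⟩ <;>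
        rw [e]
      · have := dist_le_gecc (G := T) v u
        omega
      all_goals have := dist_le_gecc (G := T) v l; omega
    · omega
  rcases splitBroadcast_cases hul hu'l huu' h₁ with ⟨rfl, e₁⟩ | ⟨rfl, e₁⟩ | ⟨rfl, e₁⟩ <;>
  rcases splitBroadcast_cases hul hu'l huu' h₂ with ⟨rfl, e₂⟩ | ⟨rfl, e₂⟩ | ⟨rfl, e₂⟩ <;>
  first | exact absurd rfl hne | omega

theorem splitBroadcast_ball (hul : T.dist l u = d + 1) (hu'l : T.dist l u' = d + 1)
    (huu' : u ≠ u') {v : V} (hv : 0 < splitBroadcast l u u' d v) :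
    T.dist v l + splitBroadcast l u u' d v ≤ d + 2 := by
  rcases splitBroadcast_cases hul hu'l huu' hv with ⟨rfl, e⟩ | ⟨rfl, e⟩ | ⟨rfl, e⟩ <;>
    simp [e, dist_comm, hul, hu'l]

theorem not_overdominates_splitBroadcast (hT : T.IsTree) (hul : T.dist l u = d + 1)
    (hu'l : T.dist l u' = d + 1) (huu' : u ≠ u') {w : V} (hwl : T.dist w l = d) (hwu : w ≠ u)
    (hwu' : w ≠ u') (v : V) : ¬ Overdominates T (splitBroadcast l u u' d) v w := by
  rintro ⟨hv, hwv⟩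
  rcases splitBroadcast_cases hul hu'l huu' hv with ⟨rfl, e⟩ | ⟨rfl, e⟩ | ⟨rfl, e⟩ <;>
    rw [e] at hwv
  · omega
  · exact hwu (hT.connected.dist_eq_zero_iff.1 (by omega))
  · exact hwu' (hT.connected.dist_eq_zero_iff.1 (by omega))

end SplitBroadcast

theorem stmt17_general {V : Type*} [Fintype V] (T : SimpleGraph V) (hT : T.IsTree)
    (f : V → ℕ) (hf : BnIndep T f) (hmax : bweight f = alphaBn T)
    (hmin : ∀ g : V → ℕ, BnIndep T g → bweight g = alphaBn T →
      (Finset.univ.filter fun w =>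
          3 ≤ T.degree w ∧ ∃ v, 0 < f v ∧ T.dist w v < f v).card ≤
        (Finset.univ.filter fun w =>
          3 ≤ T.degree w ∧ ∃ v, 0 < g v ∧ T.dist w v < g v).card) :
    ¬ ∃ l w : V, T.degree l = 1 ∧ 3 ≤ T.degree w ∧ 0 < f l ∧
      f l = T.dist l w + 2 := by
  rintro ⟨l, w, -, hw, -, hfl⟩
  obtain ⟨u, u', huu', hwu, hwu', hul, hu'l⟩ := hT.exists_adj_adj_dist_eq_add_one l hw
  set d := T.dist l w
  have hwl : T.dist w l = d := dist_comm
  set s := splitBroadcast l u u' d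
  have hball : ∀ v, 0 < s v → T.dist v l + s v ≤ f l :=
    hfl ▸ fun v hv => splitBroadcast_ball hul hu'l huu' hv
  have hbn : BnIndep T (rebroadcast T f s l) :=
    bnIndep_rebroadcast hT.connected hf (bnIndep_splitBroadcast hT hul hu'l huu') hball
  have hweight : bweight (rebroadcast T f s l) = alphaBn T := by
    have := hf.bweight_rebroadcast hball
    rw [bweight_splitBroadcast] at this
    omega
  have hfewer := overdominatedBranches_rebroadcast_ssubset hT.connected hf hball hw (by omega)
    (not_overdominates_splitBroadcast hT hul hu'l huu' hwl hwu.ne hwu'.ne)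
  exact (card_lt_card hfewer).not_ge (hmin _ hbn hweight)

/-- In a maximum-weight bn-independent broadcast on a tree with at least two
branch vertices, chosen to minimize the number of overdominated branch vertices,
no leaf overdominates a branch vertex by exactly 2. -/
theorem stmt17 {V : Type*} [Fintype V] (T : SimpleGraph V) (hT : T.IsTree)
    (hb : 2 ≤ (branchSet T).card)
    (f : V → ℕ) (hf : BnIndep T f) (hmax : bweight f = alphaBn T)
    (hmin : ∀ g : V → ℕ, BnIndep T g → bweight g = alphaBn T →
      (Finset.univ.filter fun w =>
          3 ≤ T.degree w ∧ ∃ v, 0 < f v ∧ T.dist w v < f v).card ≤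
        (Finset.univ.filter fun w =>
          3 ≤ T.degree w ∧ ∃ v, 0 < g v ∧ T.dist w v < g v).card) :
    ¬ ∃ l w : V, T.degree l = 1 ∧ 3 ≤ T.degree w ∧ 0 < f l ∧
      f l = T.dist l w + 2 :=
  stmt17_general T hT f hf hmax hmin
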